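/- arXiv:math/0610183 — 5 statements merged into one kernel-verified Lean document; each statement's English description precedes it below -/
import Mathlib

section
/- Let K be a valued field of characteristic zero whose valuation ring K° is a Henselian local ring. Let f(Y) = a_0 + a_1·Y + … + a_m·Y^m be a polynomial over K, let n be a positive integer, and let x ∈ K be nonzero. Assume there exists an index i₀ with 1 ≤ i₀ ≤ m such that: (1) v(a_{i₀})·v(x)^{i₀} ≥ v(a_i)·v(x)^i for all 0 ≤ i ≤ m (i.e., ord(a_{i₀}x^{i₀}) is minimal among the ord(a_i x^i)); (2) v(f(x)) < v(n)²·v(a_{i₀})·v(x)^{i₀} (i.e., ord f(x) > ord(n² a_{i₀} x^{i₀})); (3) v(f'(x)) ≥ v(n)·v(a_{i₀})·v(x)^{i₀−1} (i.e., ord f'(x) ≤ ord(n a_{i₀} x^{i₀−1})), where f' is the derivative of f. Then there exists a unique y₀ ∈ K with f(y₀) = 0 and v(y₀ − x) < v(n)·v(x) (i.e., rv_n(y₀) = rv_n(x)). -/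
/-!
Substituting `y = x * s` and dividing by `c = a_{i₀} x^{i₀}` turns `f` into a polynomial `g` with
integral coefficients such that `v (g 1) < v(n)^2` and `v(n) ≤ v (g' 1)`, so the theorem is
Newton's form of Hensel's lemma over `K°`, in the ball of radius `v(n)` around `1`.

Inside a Henselian local ring, write `f(a₀) = e^2 b` with `e = f'(a₀)` and `b` in the maximal
ideal. Then `f(a₀ + e b y) = e^2 b P(y)` where `P(0) = 1` and `P ≡ 1 + X` modulo the maximal
ideal. `P` need not be monic, but its reverse is, and modulo the maximal ideal it is
`X^m (X + 1)`, with `-1` a simple root; a root `u` of the reverse lifting `-1` is a unit, and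
`u⁻¹` is a root of `P`. For uniqueness, `f(a₀ + e w) = f(a₀) + e^2 Q(w)` with `Q'(0) = 1`, so two
roots `w₁ ≡ w₂ ≡ 0` of `Q - Q(w₁)` coincide.
-/

open Polynomial IsLocalRing

section CommRing

variable {R : Type*} [CommRing R]

theorem Polynomial.eval_add_eq_add_add_sq_mul (f : R[X]) (a w : R) :
    f.eval (a + w) =
      f.eval a + f.derivative.eval a * w + w ^ 2 * (taylor a f).divX.divX.eval w := by
  conv_lhs => rw [add_comm, ← taylor_eval, ← X_mul_divX_add (taylor a f),
    ← X_mul_divX_add (taylor a f).divX]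
  simp only [coeff_divX, zero_add, taylor_coeff_zero, taylor_coeff_one, eval_add, eval_mul, eval_X,
    eval_C]
  ring

theorem Polynomial.coe_eval_toSubring (p : R[X]) (T : Subring R)
    (hp : (↑p.coeffs : Set R) ⊆ T) (z : T) :
    (((p.toSubring T hp).eval z : T) : R) = p.eval ↑z := by
  conv_rhs => rw [← map_toSubring p T hp]
  exact (eval_map_apply (f := T.subtype) ..).symm

theorem Polynomial.coe_eval_derivative_toSubring (p : R[X]) (T : Subring R)
    (hp : (↑p.coeffs : Set R) ⊆ T) (z : T) :
    (((p.toSubring T hp).derivative.eval z : T) : R) = p.derivative.eval ↑z := by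
  conv_rhs => rw [← map_toSubring p T hp, derivative_map]
  exact (eval_map_apply (f := T.subtype) ..).symm

theorem HenselianLocalRing.exists_isRoot_of_map_residue_eq_one_add_X [HenselianLocalRing R]
    (P : R[X]) (h0 : P.coeff 0 = 1)
    (hP : P.map (residue R) = 1 + X) : ∃ y, P.IsRoot y := by
  obtain ⟨m, hm⟩ : ∃ m, P.natDegree = m + 1 := by
    refine Nat.exists_eq_add_one.mpr ?_
    have := natDegree_map_le (f := residue R) (p := P)
    rw [hP, add_comm, ← C_1, natDegree_X_add_C] at this
    omega
  have hQ : P.reverse.Monic := by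
    rw [Monic, reverse_leadingCoeff, trailingCoeff_eq_coeff_zero] <;> simp [h0]
  have hQres : P.reverse.map (residue R) = X ^ m * (X + 1) := by
    rw [reverse, hm, ← reflect_map, hP, reflect_add, reflect_one, ← pow_one X, reflect_monomial,
      revAt_le (by omega), Nat.add_sub_cancel]
    ring
  obtain ⟨u, hroot, hu₁⟩ := HenselianLocalRing.is_henselian P.reverse hQ (-1)
    (by rw [← residue_eq_zero_iff, ← eval_map_apply, hQres]; simp)
    (by rw [← residue_ne_zero_iff_isUnit, ← eval_map_apply, ← derivative_map, hQres]; simp)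
  have hu : IsUnit u := by
    rw [← residue_eq_zero_iff, map_sub, sub_eq_zero] at hu₁
    rw [← residue_ne_zero_iff_isUnit]
    simp [hu₁]
  let := hu.unit⁻¹.invertible
  refine ⟨↑hu.unit⁻¹, ?_⟩
  rw [IsRoot, ← eval₂_id, ← eval₂_reflect_eq_zero_iff _ _ _ _ le_rfl]
  simpa [invOf_units, reverse] using hroot

theorem HenselianLocalRing.exists_isRoot_mul_dvd_sub [HenselianLocalRing R] (f : R[X])
    (a₀ b : R) (hb : b ∈ maximalIdeal R)
    (hf : f.eval a₀ = f.derivative.eval a₀ ^ 2 * b) :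
    ∃ a, f.IsRoot a ∧ f.derivative.eval a₀ * b ∣ a - a₀ := by
  set e := f.derivative.eval a₀
  set D := (taylor a₀ f).divX.divX
  obtain ⟨y, hy⟩ := exists_isRoot_of_map_residue_eq_one_add_X
    (1 + X + C b * X ^ 2 * D.comp (C (e * b) * X)) (by simp)
    (by simp [(residue_eq_zero_iff b).mpr hb])
  refine ⟨a₀ + e * b * y, ?_, y, by ring⟩
  calc f.eval (a₀ + e * b * y)
      = e ^ 2 * b * (1 + X + C b * X ^ 2 * D.comp (C (e * b) * X)).eval y := by
        rw [eval_add_eq_add_add_sq_mul, hf]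
        simp only [eval_add, eval_one, eval_X, eval_mul, eval_C, eval_pow, eval_comp, D]
        ring
    _ = 0 := by rw [hy.eq_zero, mul_zero]

theorem IsLocalRing.eq_of_isRoot_add_mul [IsDomain R] [IsLocalRing R]
    (f : R[X]) (a₀ : R) (he : f.derivative.eval a₀ ≠ 0) {w₁ w₂ : R}
    (hw₁ : w₁ ∈ maximalIdeal R) (hw₂ : w₂ ∈ maximalIdeal R)
    (h₁ : f.IsRoot (a₀ + f.derivative.eval a₀ * w₁))
    (h₂ : f.IsRoot (a₀ + f.derivative.eval a₀ * w₂)) : w₁ = w₂ := by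
  set e := f.derivative.eval a₀
  set Q := X + X ^ 2 * (taylor a₀ f).divX.divX.comp (C e * X)
  have hQ : ∀ w, f.eval (a₀ + e * w) = f.eval a₀ + e ^ 2 * Q.eval w := fun w => by
    rw [eval_add_eq_add_add_sq_mul]
    simp only [Q, eval_add, eval_X, eval_mul, eval_C, eval_pow, eval_comp]
    ring
  have hQw : Q.eval w₁ = Q.eval w₂ := by
    have := h₁.eq_zero.trans h₂.eq_zero.symm
    rw [hQ, hQ, add_right_inj] at this
    exact mul_left_cancel₀ (pow_ne_zero 2 he) this
  -- `Q'(w₁) ≡ Q'(0) = 1` modulo the maximal ideal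
  have hQ' : IsUnit (Q.derivative.eval w₁) := by
    rw [← residue_ne_zero_iff_isUnit, ← eval_map_apply, (residue_eq_zero_iff w₁).mpr hw₁,
      ← map_zero (residue R), eval_map_apply]
    simp [Q]
  refine eq_of_eval_eq_zero_of_not_isUnit_sub (f := Q - C (Q.eval w₂)) (by simp [hQw]) (by simp)
    ?_ (by simpa using hQ')
  rw [← mem_nonunits_iff, ← mem_maximalIdeal]
  exact sub_mem hw₁ hw₂

end CommRing

section Valuation

variable {K : Type*} [Field K] {Γ₀ : Type*} [LinearOrderedCommGroupWithZero Γ₀]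
  {v : Valuation K Γ₀}

theorem Valuation.mem_maximalIdeal_integer_iff {a : v.integer} :
    a ∈ maximalIdeal v.integer ↔ v a < 1 := by
  rw [mem_maximalIdeal, mem_nonunits_iff, Valuation.Integer.not_isUnit_iff_valuation_lt_one]

theorem Valuation.coeffs_subset_integer {F : K[X]} (hF : ∀ i, v (F.coeff i) ≤ 1) :
    (↑F.coeffs : Set K) ⊆ v.integer := by
  intro a ha
  obtain ⟨i, -, rfl⟩ := mem_coeffs_iff.mp ha
  exact hF i

theorem Valuation.exists_eval_eq_zero_of_lt_sq [HenselianLocalRing v.integer] {F : K[X]}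
    (hF : ∀ i, v (F.coeff i) ≤ 1) {t : K} (ht : v t ≤ 1)
    (h : v (F.eval t) < v (F.derivative.eval t) ^ 2) :
    ∃ s, F.eval s = 0 ∧ v (s - t) * v (F.derivative.eval t) ≤ v (F.eval t) := by
  set FR := F.toSubring v.integer (coeffs_subset_integer hF)
  have hFR : ∀ z, ((FR.eval z : v.integer) : K) = F.eval ↑z := fun z => coe_eval_toSubring ..
  set e := F.derivative.eval t
  have hFR' : ((FR.derivative.eval ⟨t, ht⟩ : v.integer) : K) = e :=
    coe_eval_derivative_toSubring ..
  have he : e ≠ 0 := by rintro he; simp [he] at h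
  have hb : v (F.eval t / e ^ 2) < 1 := by
    rwa [map_div₀, map_pow, div_lt_one₀ (pow_pos (v.pos_iff.mpr he) 2)]
  obtain ⟨a, ha, w, hw⟩ := HenselianLocalRing.exists_isRoot_mul_dvd_sub FR ⟨t, ht⟩
    ⟨F.eval t / e ^ 2, hb.le⟩ (mem_maximalIdeal_integer_iff.mpr hb) (Subtype.ext (by
      push_cast [hFR, hFR']
      field_simp))
  have hw : ((a : K) - t) * e = F.eval t * w := by
    have := congrArg Subtype.val hw
    push_cast [hFR'] at this
    rw [this]
    field_simp
  refine ⟨a, by simpa [hFR] using congrArg Subtype.val ha.eq_zero, ?_⟩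
  rw [← map_mul, hw, map_mul]
  exact mul_le_of_le_one_right' w.2

theorem Valuation.eq_of_eval_eq_zero {F : K[X]} (hF : ∀ i, v (F.coeff i) ≤ 1) {t : K}
    (ht : v t ≤ 1) {s₁ s₂ : K} (h₁ : F.eval s₁ = 0) (h₂ : F.eval s₂ = 0)
    (hs₁ : v (s₁ - t) < v (F.derivative.eval t)) (hs₂ : v (s₂ - t) < v (F.derivative.eval t)) :
    s₁ = s₂ := by
  set FR := F.toSubring v.integer (coeffs_subset_integer hF)
  have hFR : ∀ z, ((FR.eval z : v.integer) : K) = F.eval ↑z := fun z => coe_eval_toSubring ..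
  set e := F.derivative.eval t
  have hFR' : ((FR.derivative.eval ⟨t, ht⟩ : v.integer) : K) = e :=
    coe_eval_derivative_toSubring ..
  have he : e ≠ 0 := by rintro he; simp [he] at hs₁
  have hrescale : ∀ s, v (s - t) < v e → v ((s - t) / e) < 1 := fun s hs => by
    rwa [map_div₀, div_lt_one₀ (v.pos_iff.mpr he)]
  have hroot : ∀ s, F.eval s = 0 → (hs : v (s - t) < v e) →
      FR.IsRoot (⟨t, ht⟩ + FR.derivative.eval ⟨t, ht⟩ * ⟨(s - t) / e, (hrescale s hs).le⟩) :=
    fun s hs₀ hs => Subtype.ext (by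
      push_cast [hFR, hFR']
      rw [mul_div_cancel₀ _ he, add_sub_cancel, hs₀])
  have := IsLocalRing.eq_of_isRoot_add_mul FR ⟨t, ht⟩
    (fun h => he (by simpa [hFR'] using congrArg Subtype.val h))
    (mem_maximalIdeal_integer_iff.mpr (hrescale s₁ hs₁))
    (mem_maximalIdeal_integer_iff.mpr (hrescale s₂ hs₂)) (hroot s₁ h₁ hs₁) (hroot s₂ h₂ hs₂)
  simpa [he] using congrArg Subtype.val this

theorem Valuation.existsUnique_eval_eq_zero [HenselianLocalRing v.integer] {F : K[X]}
    (hF : ∀ i, v (F.coeff i) ≤ 1) {t : K} (ht : v t ≤ 1) {r : Γ₀}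
    (hr : r ≤ v (F.derivative.eval t)) (h : v (F.eval t) < r ^ 2) :
    ∃! s, F.eval s = 0 ∧ v (s - t) < r := by
  obtain ⟨s, hs, hst⟩ :=
    exists_eval_eq_zero_of_lt_sq hF ht (h.trans_le (pow_le_pow_left₀ zero_le hr 2))
  have hlt : v (s - t) < r := by
    refine lt_of_mul_lt_mul_right (?_ : v (s - t) * v (F.derivative.eval t) < r * _) zero_le
    calc v (s - t) * v (F.derivative.eval t) ≤ v (F.eval t) := hst
      _ < r * r := sq r ▸ h
      _ ≤ r * v (F.derivative.eval t) := mul_le_mul_right hr r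
  exact ⟨s, ⟨hs, hlt⟩, fun s' ⟨hs', hs't⟩ =>
    eq_of_eval_eq_zero hF ht hs' hs (hs't.trans_le hr) (hlt.trans_le hr)⟩

theorem Valuation.existsUnique_eval_eq_zero_rescaled [HenselianLocalRing v.integer] {F : K[X]}
    {x c : K} (hx : x ≠ 0) (hc : c ≠ 0) (hF : ∀ i, v (F.coeff i) * v x ^ i ≤ v c) {r : Γ₀}
    (hr : r * v c ≤ v x * v (F.derivative.eval x)) (h : v (F.eval x) < r ^ 2 * v c) :
    ∃! y, F.eval y = 0 ∧ v (y - x) < r * v x := by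
  have hvc : 0 < v c := v.pos_iff.mpr hc
  set g := C c⁻¹ * F.comp (C x * X)
  have hg_eval : ∀ s, g.eval s = c⁻¹ * F.eval (x * s) := by simp [g]
  have hg : ∀ i, v (g.coeff i) ≤ 1 := fun i => by
    rw [coeff_C_mul, comp_C_mul_X_coeff, map_mul, map_inv₀, ← div_eq_inv_mul, div_le_one₀ hvc,
      map_mul, map_pow]
    exact hF i
  have hg₁ : v (g.eval 1) < r ^ 2 := by
    rwa [hg_eval, mul_one, map_mul, map_inv₀, ← div_eq_inv_mul, div_lt_iff₀ hvc]
  have hg'₁ : r ≤ v (g.derivative.eval 1) := by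
    have : g.derivative.eval 1 = c⁻¹ * (x * F.derivative.eval x) := by
      simp [g, derivative_comp]
    rwa [this, map_mul, map_inv₀, ← div_eq_inv_mul, le_div_iff₀ hvc, map_mul]
  refine ((Equiv.mulLeft₀ x hx).existsUnique_congr fun s => ?_).mp
    (existsUnique_eval_eq_zero hg (t := 1) (by simp) hg'₁ hg₁)
  simp only [Equiv.mulLeft₀_apply]
  rw [hg_eval, mul_eq_zero, or_iff_right (inv_ne_zero hc), ← mul_sub_one, map_mul,
    mul_comm (v x), mul_lt_mul_iff_left₀ (v.pos_iff.mpr hx)]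

end Valuation

theorem hensel_lemma_unique_root_general
    {K : Type*} [Field K]
    {Γ₀ : Type*} [LinearOrderedCommGroupWithZero Γ₀]
    (v : Valuation K Γ₀) (hhens : HenselianLocalRing v.integer)
    (f : K[X]) (n : ℕ) (x : K) (hx : x ≠ 0)
    (i₀ : ℕ) (hi₀1 : 1 ≤ i₀)
    (hmin : ∀ i ≤ f.natDegree, v (f.coeff i) * v x ^ i ≤ v (f.coeff i₀) * v x ^ i₀)
    (hfx : v (f.eval x) < v (n : K) ^ 2 * (v (f.coeff i₀) * v x ^ i₀))
    (hfx' : v (n : K) * (v (f.coeff i₀) * v x ^ (i₀ - 1)) ≤ v (f.derivative.eval x)) :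
    ∃! y₀ : K, f.eval y₀ = 0 ∧ v (y₀ - x) < v (n : K) * v x := by
  have := hhens
  have hc : v (f.coeff i₀ * x ^ i₀) ≠ 0 := by
    rw [map_mul, map_pow]
    exact right_ne_zero_of_mul (zero_le.trans_lt hfx).ne'
  refine Valuation.existsUnique_eval_eq_zero_rescaled hx (v.ne_zero_iff.mp hc) (fun i => ?_) ?_
    (by rwa [map_mul, map_pow])
  · rw [map_mul, map_pow]
    rcases le_or_gt i f.natDegree with hi | hi
    · exact hmin i hi
    · simp [coeff_eq_zero_of_natDegree_lt hi]
  · obtain ⟨k, rfl⟩ := Nat.exists_eq_add_of_le' hi₀1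
    calc v (n : K) * v (f.coeff (k + 1) * x ^ (k + 1))
        = v (n : K) * (v (f.coeff (k + 1)) * v x ^ (k + 1 - 1)) * v x := by
          rw [map_mul, map_pow, Nat.add_sub_cancel, pow_succ, mul_assoc, mul_assoc]
      _ ≤ v (f.derivative.eval x) * v x := mul_le_mul_left hfx' _
      _ = v x * v (f.derivative.eval x) := mul_comm _ _

/-- Hensel-type lemma (Lemma 7.13 / `hm` in the paper, existence-uniqueness part):
in a Henselian valued field of characteristic zero, under the stated conditions on the
valuations of `f(x)`, `f'(x)` and the terms `aᵢ xⁱ`, there is a unique root `y₀` of `f`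
with `rv_n(y₀) = rv_n(x)`, i.e. `v (y₀ - x) < v n * v x`. -/
theorem hensel_lemma_unique_root
    {K : Type*} [Field K] [CharZero K]
    {Γ₀ : Type*} [LinearOrderedCommGroupWithZero Γ₀]
    (v : Valuation K Γ₀) (hhens : HenselianLocalRing v.integer)
    (f : K[X]) (n : ℕ) (hn : 0 < n) (x : K) (hx : x ≠ 0)
    (i₀ : ℕ) (hi₀1 : 1 ≤ i₀) (hi₀m : i₀ ≤ f.natDegree)
    (hmin : ∀ i ≤ f.natDegree, v (f.coeff i) * v x ^ i ≤ v (f.coeff i₀) * v x ^ i₀)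
    (hfx : v (f.eval x) < v (n : K) ^ 2 * (v (f.coeff i₀) * v x ^ i₀))
    (hfx' : v (n : K) * (v (f.coeff i₀) * v x ^ (i₀ - 1)) ≤ v (f.derivative.eval x)) :
    ∃! y₀ : K, f.eval y₀ = 0 ∧ v (y₀ - x) < v (n : K) * v x :=
  hensel_lemma_unique_root_general v hhens f n x hx i₀ hi₀1 hmin hfx hfx'
end

section
/- Let K be a valued field of characteristic zero whose valuation ring K° is a Henselian local ring. Let f(Y) = a_0 + a_1·Y + … + a_m·Y^m be a polynomial over K, let n be a positive integer, and let x ∈ K be nonzero. Assume there exists an index i₀ with 1 ≤ i₀ ≤ m such that: (1) v(a_{i₀})·v(x)^{i₀} ≥ v(a_i)·v(x)^i for all 0 ≤ i ≤ m; (2) v(f(x)) < v(n)²·v(a_{i₀})·v(x)^{i₀}; (3) v(f'(x)) ≥ v(n)·v(a_{i₀})·v(x)^{i₀−1}. Let y₀ be the unique element of K with f(y₀) = 0 and v(y₀ − x) < v(n)·v(x), and write f(Y) = Σ_i b_i·(Y − y₀)^i (the Taylor expansion of f at y₀). Then for every w ∈ K with v(w − x) < v(n)·v(x), one has v(f(w))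 = v(b₁)·v(w − y₀). -/
/-!
Bound polynomials by their Gauss norm at radius `v x`; by `hmin`, that of `f` is
`A * v x` with `A = v (a_{i₀}) * v x ^ (i₀ - 1)`. Such bounds survive Taylor expansion at points
of the disc `v z ≤ v x`, and pass to `f'` and to `(f - f(0)) / X` at the cost of a factor `v x`.
On the smaller disc `v s < v n * v x` every nonconstant term of a polynomial of Gauss norm `≤ B`
is `< v n * B`, so the polynomial keeps the valuation of its constant term whenever that is
`≥ v n * B`. Applied to `f'` expanded at `x` this gives `v (f' y₀) = v (f' x) ≥ v n * A`, and
then applied to `(f(y₀ + s) - f(y₀)) / s`, whose constant term is `b₁ = f' y₀`, it gives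
`v (f w) = v b₁ * v (w - y₀)`.
-/

open Polynomial

theorem Valuation.map_natCast_le_one {R : Type*} [CommRing R] {Γ₀ : Type*}
    [LinearOrderedCommGroupWithZero Γ₀] (v : Valuation R Γ₀) (n : ℕ) : v (n : R) ≤ 1 :=
  natCast_mem v.integer n

namespace Polynomial

variable {R : Type*} [CommRing R] {Γ₀ : Type*} [LinearOrderedCommGroupWithZero Γ₀]
  (v : Valuation R Γ₀)

/-- The Gauss norm of `p` at radius `ρ` is at most `B`. -/
def CoeffBounded (ρ B : Γ₀) (p : R[X]) : Prop :=
  ∀ i, v (p.coeff i) * ρ ^ i ≤ B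

namespace CoeffBounded

variable {v} {ρ B : Γ₀} {p q : R[X]}

theorem mono_coeff (hp : p.CoeffBounded v ρ B) (hqp : ∀ i, v (q.coeff i) ≤ v (p.coeff i)) :
    q.CoeffBounded v ρ B := fun i =>
  (mul_le_mul_left (hqp i) _).trans (hp i)

theorem eval_le (hp : p.CoeffBounded v ρ B) {z : R} (hz : v z ≤ ρ) : v (p.eval z) ≤ B := by
  rw [eval_eq_sum_range]
  refine v.map_sum_le fun i _ => ?_
  rw [map_mul, map_pow]
  exact (mul_le_mul_right (pow_le_pow_left' hz i) _).trans (hp i)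

theorem taylor (hp : p.CoeffBounded v ρ B) {z : R} (hz : v z ≤ ρ) :
    (taylor z p).CoeffBounded v ρ B := by
  intro i
  rcases eq_or_ne (ρ ^ i) 0 with hρi | hρi
  · simp [hρi]
  rw [taylor_coeff, ← le_mul_inv_iff₀ (zero_lt_iff.mpr hρi)]
  refine CoeffBounded.eval_le (fun m => ?_) hz
  rw [hasseDeriv_coeff, map_mul, le_mul_inv_iff₀ (zero_lt_iff.mpr hρi), mul_assoc, mul_assoc,
    ← pow_add]
  exact (mul_le_of_le_one_left zero_le (v.map_natCast_le_one _)).trans (hp (m + i))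

theorem divX (hp : p.CoeffBounded v ρ (B * ρ)) (hρ : ρ ≠ 0) : p.divX.CoeffBounded v ρ B := by
  intro i
  rw [coeff_divX, ← mul_le_mul_iff_left₀ (zero_lt_iff.mpr hρ), mul_assoc, ← pow_succ]
  exact hp (i + 1)

theorem derivative (hp : p.CoeffBounded v ρ (B * ρ)) (hρ : ρ ≠ 0) :
    (derivative p).CoeffBounded v ρ B :=
  (hp.divX hρ).mono_coeff fun i => by
    rw [coeff_derivative, coeff_divX, map_mul]
    exact mul_le_of_le_one_right zero_le (by exact_mod_cast v.map_natCast_le_one (i + 1))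

theorem map_eval_eq_coeff_zero (hp : p.CoeffBounded v ρ B) {r : Γ₀} (hr : r ≤ 1) {s : R}
    (hs : v s < r * ρ) (h0 : r * B ≤ v (p.coeff 0)) : v (p.eval s) = v (p.coeff 0) := by
  have hsρ : v s ≤ ρ := hs.le.trans (mul_le_of_le_one_left zero_le hr)
  rcases eq_or_ne B 0 with rfl | hB
  · have h0 : v (p.coeff 0) ≤ 0 := by simpa using hp 0
    rw [le_zero_iff.mp (hp.eval_le hsρ), le_zero_iff.mp h0]
  have hρ : ρ ≠ 0 := by rintro rfl; simp at hs
  have hdivX : p.divX.CoeffBounded v ρ (B * ρ⁻¹) :=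
    CoeffBounded.divX (by rwa [inv_mul_cancel_right₀ hρ]) hρ
  have htail : v (p.eval s - p.coeff 0) < r * B := by
    have hsplit : p.eval s - p.coeff 0 = p.divX.eval s * s := by
      conv_lhs => rw [← divX_mul_X_add p]
      simp
    have hBρ : 0 < B * ρ⁻¹ := zero_lt_iff.mpr (mul_ne_zero hB (inv_ne_zero hρ))
    calc v (p.eval s - p.coeff 0) = v (p.divX.eval s) * v s := by rw [hsplit, map_mul]
      _ ≤ B * ρ⁻¹ * v s := mul_le_mul_left (hdivX.eval_le hsρ) _
      _ < B * ρ⁻¹ * (r * ρ) := mul_lt_mul_of_pos_left hs hBρ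
      _ = r * B := by rw [mul_comm r, ← mul_assoc, inv_mul_cancel_right₀ hρ, mul_comm]
  exact v.map_eq_of_sub_lt (htail.trans_le h0)

end CoeffBounded

end Polynomial

theorem hensel_lemma_value_at_rv_class_general
    {K : Type*} [Field K]
    {Γ₀ : Type*} [LinearOrderedCommGroupWithZero Γ₀]
    (v : Valuation K Γ₀)
    (f : K[X]) (n : ℕ) (x : K)
    (i₀ : ℕ) (hi₀1 : 1 ≤ i₀)
    (hmin : ∀ i ≤ f.natDegree, v (f.coeff i) * v x ^ i ≤ v (f.coeff i₀) * v x ^ i₀)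
    (hfx : v (f.eval x) < v (n : K) ^ 2 * (v (f.coeff i₀) * v x ^ i₀))
    (hfx' : v (n : K) * (v (f.coeff i₀) * v x ^ (i₀ - 1)) ≤ v (f.derivative.eval x))
    (y₀ : K) (hroot : f.eval y₀ = 0) (hrv : v (y₀ - x) < v (n : K) * v x) :
    ∀ w : K, v (w - x) < v (n : K) * v x →
      v (f.eval w) = v ((Polynomial.taylor y₀ f).coeff 1) * v (w - y₀) := by
  set A := v (f.coeff i₀) * v x ^ (i₀ - 1)
  have hM : v (f.coeff i₀) * v x ^ i₀ = A * v x := by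
    rw [mul_assoc, ← pow_succ, Nat.sub_add_cancel hi₀1]
  have hpos : v (n : K) ^ 2 * (A * v x) ≠ 0 := hM ▸ (zero_le.trans_lt hfx).ne'
  have hvx : v x ≠ 0 := right_ne_zero_of_mul (right_ne_zero_of_mul hpos)
  have hvn : v (n : K) ≤ 1 := v.map_natCast_le_one n
  have hf : f.CoeffBounded v (v x) (A * v x) := fun i => by
    rcases le_or_gt i f.natDegree with hi | hi
    · exact hM ▸ hmin i hi
    · simp [coeff_eq_zero_of_natDegree_lt hi]
  have hy₀ : v y₀ ≤ v x := by
    rw [← sub_add_cancel y₀ x]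
    exact v.map_add_le (hrv.le.trans (mul_le_of_le_one_left zero_le hvn)) le_rfl
  have hb₁ : v (n : K) * A ≤ v ((taylor y₀ f).coeff 1) := by
    have hf' := (hf.derivative hvx).taylor le_rfl
    rwa [taylor_coeff_one, ← taylor_eval_sub x,
      hf'.map_eval_eq_coeff_zero hvn hrv (by rwa [taylor_coeff_zero]), taylor_coeff_zero]
  intro w hw
  have hs : v (w - y₀) < v (n : K) * v x := by
    rw [← sub_sub_sub_cancel_right w y₀ x]
    exact (v.map_sub _ _).trans_lt (max_lt hw hrv)
  have hg : (taylor y₀ f).divX.CoeffBounded v (v x) A := (hf.taylor hy₀).divX hvx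
  have heval : f.eval w = (taylor y₀ f).divX.eval (w - y₀) * (w - y₀) := by
    conv_lhs => rw [← taylor_eval_sub y₀, ← divX_mul_X_add (taylor y₀ f)]
    simp [hroot]
  rw [heval, map_mul, hg.map_eval_eq_coeff_zero hvn hs (by rwa [coeff_divX]), coeff_divX]

/-- Hensel-type lemma (Lemma 7.13 / `hm` in the paper, second part): with `y₀` the unique
root of `f` with `rv_n(y₀) = rv_n(x)`, and `f(Y) = Σ bᵢ (Y - y₀)ⁱ` the Taylor expansion of
`f` at `y₀`, for every `w` with `rv_n(w) = rv_n(x)` one has `ord f(w) = ord (b₁ (w - y₀))`,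
i.e. multiplicatively `v (f w) = v b₁ * v (w - y₀)`. -/
theorem hensel_lemma_value_at_rv_class
    {K : Type*} [Field K] [CharZero K]
    {Γ₀ : Type*} [LinearOrderedCommGroupWithZero Γ₀]
    (v : Valuation K Γ₀) (hhens : HenselianLocalRing v.integer)
    (f : K[X]) (n : ℕ) (hn : 0 < n) (x : K) (hx : x ≠ 0)
    (i₀ : ℕ) (hi₀1 : 1 ≤ i₀) (hi₀m : i₀ ≤ f.natDegree)
    (hmin : ∀ i ≤ f.natDegree, v (f.coeff i) * v x ^ i ≤ v (f.coeff i₀) * v x ^ i₀)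
    (hfx : v (f.eval x) < v (n : K) ^ 2 * (v (f.coeff i₀) * v x ^ i₀))
    (hfx' : v (n : K) * (v (f.coeff i₀) * v x ^ (i₀ - 1)) ≤ v (f.derivative.eval x))
    (y₀ : K) (hroot : f.eval y₀ = 0) (hrv : v (y₀ - x) < v (n : K) * v x) :
    ∀ w : K, v (w - x) < v (n : K) * v x →
      v (f.eval w) = v ((Polynomial.taylor y₀ f).coeff 1) * v (w - y₀) :=
  hensel_lemma_value_at_rv_class_general v f n x i₀ hi₀1 hmin hfx hfx' y₀ hroot hrv
end

section
/- Let K be a valued field of characteristic zero whose valuation ring K° is a Henselian local ring. Let f(Y) = a_0 + a_1·Y + … + a_m·Y^m be a polynomial over K, let n be a positive integer, and let x ∈ K satisfy v(x) = 1. Assume: all coefficients lie in the valuation ring, i.e., v(a_i) ≤ 1 for all i; there is an index i₀ with 1 ≤ i₀ ≤ m and v(a_{i₀}) = 1; v(f(x)) < v(n)²; and v(f'(x)) ≥ v(n). Let y₀ be the unique root of f with v(y₀ − x) < v(n), and write f(Y) = Σ_j b_j·(Y − y₀)^j (the Taylor expansion of f at y₀). Then v(b_j) ≤ 1 for every j,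 and v(b₁) ≥ v(n). -/
open Polynomial

lemma val_natCast_le_one {K : Type*} [Field K] {Γ₀ : Type*}
    [LinearOrderedCommGroupWithZero Γ₀] (v : Valuation K Γ₀) (m : ℕ) :
    v (m : K) ≤ 1 := by
  induction m with
  | zero => simp
  | succ k ih =>
      push_cast
      calc v ((k : K) + 1) ≤ max (v (k : K)) (v (1 : K)) := v.map_add _ _
      _ ≤ 1 := by simp [ih]

lemma val_eval_le_one {K : Type*} [Field K] {Γ₀ : Type*}
    [LinearOrderedCommGroupWithZero Γ₀] (v : Valuation K Γ₀) (p : K[X])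
    (hp : ∀ i, v (p.coeff i) ≤ 1) {y : K} (hy : v y ≤ 1) :
    v (p.eval y) ≤ 1 := by
  rw [Polynomial.eval_eq_sum_range]
  apply v.map_sum_le
  intro i _
  rw [v.map_mul]
  calc v (p.coeff i) * v (y ^ i) ≤ 1 * 1 := by
        apply mul_le_mul' (hp i)
        rw [v.map_pow]
        exact pow_le_one' hy i
  _ = 1 := one_mul 1

/-- Unit case of the paper's Hensel-type lemma: if all coefficients of `f` lie in the
valuation ring, the `i₀`-th coefficient and `x` are units, `ord f(x) > ord n²` and
`ord f'(x) ≤ ord n`, then in the Taylor expansion `f(Y) = Σ bⱼ (Y - y₀)ʲ` at the unique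
root `y₀` with `rv_n(y₀) = rv_n(x)` one has `ord bⱼ ≥ 0` for all `j` (i.e. `v bⱼ ≤ 1`)
and `ord b₁ ≤ ord n` (i.e. `v n ≤ v b₁`). -/
theorem hensel_lemma_unit_case_taylor_coeffs
    {K : Type*} [Field K] [CharZero K]
    {Γ₀ : Type*} [LinearOrderedCommGroupWithZero Γ₀]
    (v : Valuation K Γ₀) (hhens : HenselianLocalRing v.integer)
    (f : K[X]) (n : ℕ) (hn : 0 < n) (x : K) (hx : v x = 1)
    (hcoeff : ∀ i, v (f.coeff i) ≤ 1)
    (i₀ : ℕ) (hi₀1 : 1 ≤ i₀) (hi₀m : i₀ ≤ f.natDegree) (hunit : v (f.coeff i₀) = 1)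
    (hfx : v (f.eval x) < v (n : K) ^ 2)
    (hfx' : v (n : K) ≤ v (f.derivative.eval x))
    (y₀ : K) (hroot : f.eval y₀ = 0) (hrv : v (y₀ - x) < v (n : K)) :
    (∀ j, v ((Polynomial.taylor y₀ f).coeff j) ≤ 1) ∧
      v (n : K) ≤ v ((Polynomial.taylor y₀ f).coeff 1) := by
  have hvn1 : v (n : K) ≤ 1 := val_natCast_le_one v n
  have hy0 : v y₀ ≤ 1 := by
    have : y₀ = (y₀ - x) + x := by ring
    rw [this]
    calc v ((y₀ - x) + x) ≤ max (v (y₀ - x)) (v x) := v.map_add _ _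
    _ ≤ 1 := by
        apply max_le _ (le_of_eq hx)
        exact le_of_lt (lt_of_lt_of_le hrv hvn1)
  have hder : ∀ i, v (f.derivative.coeff i) ≤ 1 := by
    intro i
    rw [Polynomial.coeff_derivative]
    rw [v.map_mul]
    calc v (f.coeff (i + 1)) * v ((i : K) + 1) ≤ 1 * 1 := by
          apply mul_le_mul' (hcoeff _)
          have := val_natCast_le_one v (i + 1)
          push_cast at this
          exact this
    _ = 1 := one_mul 1
  constructor
  · intro j
    rw [Polynomial.taylor_coeff]
    apply val_eval_le_one v _ _ hy0
    intro i
    rw [Polynomial.hasseDeriv_coeff]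
    rw [v.map_mul]
    calc v (((i + j).choose j : K)) * v (f.coeff (i + j)) ≤ 1 * 1 :=
          mul_le_mul' (val_natCast_le_one v _) (hcoeff _)
    _ = 1 := one_mul 1
  · rw [Polynomial.taylor_coeff_one]
    -- f'(y₀) = f'(x) + (y₀ - x) * c with v c ≤ 1
    set R := v.integer
    have hd : (f.derivative.coeffs : Set K) ⊆ R := by
      intro a ha
      obtain ⟨i, -, rfl⟩ := Polynomial.mem_coeffs_iff.mp ha
      exact hder i
    set D : Polynomial R := f.derivative.toSubring R hd with hD
    have hmap : D.map R.subtype = f.derivative := f.derivative.map_toSubring R hd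
    have hyR : y₀ ∈ R := hy0
    have hxR : x ∈ R := le_of_eq hx
    obtain ⟨c, hc⟩ := sub_dvd_eval_sub (⟨y₀, hyR⟩ : R) ⟨x, hxR⟩ D
    have e1 : f.derivative.eval y₀ = ((D.eval ⟨y₀, hyR⟩ : R) : K) := by
      rw [← hmap, Polynomial.eval_map]
      simpa using Polynomial.eval₂_at_apply (p := D) R.subtype ⟨y₀, hyR⟩
    have e2 : f.derivative.eval x = ((D.eval ⟨x, hxR⟩ : R) : K) := by
      rw [← hmap, Polynomial.eval_map]
      simpa using Polynomial.eval₂_at_apply (p := D) R.subtype ⟨x, hxR⟩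
    have key : f.derivative.eval y₀ - f.derivative.eval x = (y₀ - x) * (c : K) := by
      rw [e1, e2]
      exact_mod_cast congrArg (R.subtype) hc
    have hcle : v (c : K) ≤ 1 := c.2
    have hsmall : v ((y₀ - x) * (c : K)) < v (f.derivative.eval x) := by
      rw [v.map_mul]
      calc v (y₀ - x) * v (c : K) ≤ v (y₀ - x) * 1 := mul_le_mul' le_rfl hcle
      _ = v (y₀ - x) := mul_one _
      _ < v (n : K) := hrv
      _ ≤ v (f.derivative.eval x) := hfx'
    have : f.derivative.eval y₀ = f.derivative.eval x + (y₀ - x) * (c : K) := by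
      rw [← key]; ring
    rw [this]
    rw [v.map_add_eq_of_lt_left hsmall]
    exact hfx'
end

section
/- Let K be a valued field of characteristic zero whose valuation ring K° is a Henselian local ring, and let f be a polynomial over K of degree d in one variable. Then there exist a positive integer k and a finite subset C ⊆ K such that for every y ∈ K there is some c ∈ C for which, writing f(Y) = Σ_{i=0}^d b_{i,c}·(Y − c)^i (the Taylor expansion of f at c), one has v(f(y)) ≥ v(k)·v(b_{i,c})·v(y − c)^i for all 0 ≤ i ≤ d (i.e., ord f(y) ≤ min_{0 ≤ i ≤ d} ord(k·b_{i,c}·(y − c)^i)). -/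
/-!
Induction on the degree of `f`. If `f` has a root `z`, write `f = (X - z) g`: a center `c` of `g`
at `y` is still a center of `f` unless `z` is strictly closer to `y` than `c`, and then `z` is
one. If `f` has no root, use the centers of `f'` and the constant `N²`, `N = k · (deg f)!`. At such
a center `c`, either `v (f y) ≥ v N · v (y - c) · v (f' y)` and `c` is a center of `f`, or the
linear Taylor term of `f` at `y` dominates on the disc of radius `v N · v (y - c)`; then
`f (y + t X) / f y` with `t = f y / f' y` reduces to `1 + X` modulo the maximal ideal, and Hensel's
lemma gives a root of `f`.
-/

open Polynomial IsLocalRing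

theorem Polynomial.derivative_taylor {R : Type*} [CommSemiring R] (r : R) (f : R[X]) :
    derivative (taylor r f) = taylor r (derivative f) := by
  simp [taylor_apply, derivative_comp]

theorem HenselianLocalRing.exists_isRoot_of_map_residue_eq_X_add_one {R : Type*} [CommRing R]
    [HenselianLocalRing R] {g : R[X]} (hg : g.map (residue R) = X + 1) : ∃ a, g.IsRoot a := by
  set n := g.natDegree
  have hn : 1 ≤ n := by
    have := natDegree_map_le (f := residue R) (p := g)
    rwa [hg, ← C_1, natDegree_X_add_C] at this
  have h0 : residue R (g.coeff 0) = 1 := by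
    rw [← coeff_map, hg]
    simp
  have hu : IsUnit (g.coeff 0) := by
    rw [← residue_ne_zero_iff_isUnit, h0]
    exact one_ne_zero
  -- The monic rescaling `P` of the reversal of `g` reduces to `X ^ (n - 1) * (X + 1)`, with the
  -- simple root `-1`; the inverse of its Hensel lift is a root of `g`.
  set P := C (↑hu.unit⁻¹ : R) * g.reflect n
  have hmonic : P.Monic := by
    refine monic_of_natDegree_le_of_coeff_eq_one n ?_ ?_
    · exact natDegree_C_mul_le _ _ |>.trans (natDegree_reflect_le.trans (max_self n).le)
    · simp [P, coeff_reflect]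
  have hPmap : P.map (residue R) = X ^ (n - 1) * (X + 1) := by
    have hres : residue R (↑hu.unit⁻¹ : R) = 1 := by
      rw [← mul_right_inj' (residue_ne_zero_iff_isUnit _ |>.2 hu), ← map_mul]
      simp [h0]
    rw [Polynomial.map_mul, map_C, hres, C_1, one_mul, ← reflect_map, hg, reflect_add,
      ← pow_one X, reflect_monomial, reflect_one, revAt_le hn, pow_one]
    conv_rhs => rw [mul_add, mul_one, ← pow_succ, Nat.sub_add_cancel hn]
    ring
  have H := ((HenselianLocalRing.TFAE R).out 0 1).mp ‹HenselianLocalRing R›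
  obtain ⟨a, ha, hares⟩ := H P hmonic (-1)
    (by simp [aeval_def, ← eval_map, hPmap])
    (by simp [aeval_def, ← eval_map, ← derivative_map, hPmap, derivative_mul])
  have haunit : IsUnit a := (residue_ne_zero_iff_isUnit a).1 (by simp [hares])
  let _ := Units.invertible haunit.unit⁻¹
  refine ⟨↑haunit.unit⁻¹, ?_⟩
  rw [IsRoot, ← eval₂_id, ← eval₂_reflect_eq_zero_iff _ _ n g le_rfl]
  simpa [P, IsRoot, hu.unit.ne_zero] using ha

theorem mul_pow_lt_of_mul_pow_le {Γ₀ : Type*} [LinearOrderedCommGroupWithZero Γ₀]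
    {β τ σ δ : Γ₀} {j : ℕ} (hj : 2 ≤ j) (hτ : τ < σ) (hβ : β * σ ^ (j - 1) ≤ δ)
    (hτδ : 0 < τ * δ) : β * τ ^ j < τ * δ := by
  rcases eq_zero_or_pos β with rfl | hβ0
  · simpa using hτδ
  have hτ0 : 0 < τ := pos_of_mul_pos_left hτδ zero_le
  calc β * τ ^ j = β * τ ^ (j - 1) * τ := by
        rw [mul_assoc, ← pow_succ, Nat.sub_add_cancel (by omega : 1 ≤ j)]
    _ < β * σ ^ (j - 1) * τ := by
        have : τ ^ (j - 1) < σ ^ (j - 1) := pow_lt_pow_left₀ hτ zero_le (by omega)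
        gcongr
    _ ≤ τ * δ := by rw [mul_comm τ]; gcongr

namespace Valuation

section CommRing

variable {R : Type*} [CommRing R] {Γ₀ : Type*} [LinearOrderedCommGroupWithZero Γ₀]
  (v : Valuation R Γ₀)

theorem map_natCast_le_one_s5 (n : ℕ) : v (n : R) ≤ 1 :=
  (v.mem_integer_iff _).1 (natCast_mem v.integer n)

theorem map_natCast_le_of_dvd {m n : ℕ} (h : m ∣ n) : v (n : R) ≤ v (m : R) := by
  obtain ⟨q, rfl⟩ := h
  rw [Nat.cast_mul, map_mul]
  exact mul_le_of_le_one_right' (v.map_natCast_le_one_s5 q)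

variable {v}

theorem mul_map_add_mul_le {a b B : Γ₀} {x y : R} (hx : a * v x * b ≤ B)
    (hy : a * v y * b ≤ B) : a * v (x + y) * b ≤ B := by
  rcases le_max_iff.1 (v.map_add x y) with h | h
  · exact le_trans (by gcongr) hx
  · exact le_trans (by gcongr) hy

variable (v)

/-- `GaussBound v a ρ p B` says `a * ‖p‖_ρ ≤ B` for the Gauss norm `‖p‖_ρ = max_i v(pᵢ) ρⁱ`. -/
def GaussBound (a ρ : Γ₀) (p : R[X]) (B : Γ₀) : Prop :=
  ∀ i, a * v (p.coeff i) * ρ ^ i ≤ B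

variable {v}

namespace GaussBound

variable {a ρ B : Γ₀} {p q : R[X]}

theorem mono (h : GaussBound v a ρ p B) {B' : Γ₀} (hB : B ≤ B') : GaussBound v a ρ p B' :=
  fun i => (h i).trans hB

theorem mul_left (h : GaussBound v a ρ p B) (b : Γ₀) : GaussBound v (b * a) ρ p (b * B) :=
  fun i => by simpa only [mul_assoc] using mul_le_mul_right (by simpa only [mul_assoc] using h i) b

theorem add (hp : GaussBound v a ρ p B) (hq : GaussBound v a ρ q B) :
    GaussBound v a ρ (p + q) B := fun i => by
  rw [coeff_add]
  exact mul_map_add_mul_le (hp i) (hq i)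

theorem X_mul (h : GaussBound v a ρ p B) : GaussBound v a ρ (X * p) (B * ρ) := by
  rintro (_ | i)
  · simp
  · rw [coeff_X_mul, pow_succ, ← mul_assoc]
    exact mul_le_mul_left (h i) ρ

theorem C_mul (h : GaussBound v a ρ p B) (c : R) : GaussBound v a ρ (C c * p) (v c * B) := by
  intro i
  rw [coeff_C_mul, map_mul, mul_left_comm, mul_assoc]
  exact mul_le_mul_right (by simpa only [mul_assoc] using h i) (v c)

theorem taylor (h : GaussBound v a ρ p B) {s : R} (hs : v s ≤ ρ) :
    GaussBound v a ρ (Polynomial.taylor s p) B := by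
  intro j
  rw [taylor_coeff, hasseDeriv_apply, Polynomial.sum_def, eval_finsetSum]
  refine Finset.sum_induction _ (fun x => a * v x * ρ ^ j ≤ B)
    (fun _ _ => mul_map_add_mul_le) (by simp) fun m _ => ?_
  rw [eval_monomial]
  rcases lt_or_ge m j with hmj | hjm
  · simp [Nat.choose_eq_zero_of_lt hmj]
  calc a * v ((m.choose j : R) * p.coeff m * s ^ (m - j)) * ρ ^ j
      ≤ a * (1 * v (p.coeff m) * ρ ^ (m - j)) * ρ ^ j := by
        rw [map_mul, map_mul, map_pow]
        gcongr
        exact v.map_natCast_le_one_s5 _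
    _ = a * v (p.coeff m) * ρ ^ m := by
        rw [one_mul, mul_assoc, mul_assoc, ← pow_add, Nat.sub_add_cancel hjm, mul_assoc]
    _ ≤ B := h m

theorem eval_le {s : R} (h : GaussBound v a (v s) p B) : a * v (p.eval s) ≤ B := by
  simpa using h.taylor le_rfl 0

theorem coeff_mul_pow_le (h : GaussBound v a ρ (divX p) B) (ha : a ≤ 1) {j : ℕ} (hj : 2 ≤ j) :
    v (p.coeff j) * (a * ρ) ^ (j - 1) ≤ B := by
  obtain ⟨n, rfl⟩ : ∃ n, j = n + 2 := ⟨j - 2, by omega⟩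
  calc v (p.coeff (n + 2)) * (a * ρ) ^ (n + 2 - 1)
      = a ^ n * (a * v ((divX p).coeff (n + 1)) * ρ ^ (n + 1)) := by
        rw [coeff_divX, show n + 2 - 1 = n + 1 by omega, mul_pow, pow_succ a]
        simp only [mul_comm, mul_left_comm, mul_assoc]
    _ ≤ 1 * B := by gcongr; exacts [pow_le_one' ha n, h (n + 1)]
    _ = B := one_mul B

theorem divX_of_derivative (h : GaussBound v a ρ (derivative p) B) :
    GaussBound v (a * v (p.natDegree.factorial : R)) ρ (divX p) B := by
  intro n
  rw [coeff_divX]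
  rcases le_or_gt (n + 1) p.natDegree with hn | hn
  · refine le_trans ?_ (h n)
    rw [coeff_derivative, map_mul, mul_comm (v (p.coeff (n + 1))), ← mul_assoc]
    gcongr
    exact_mod_cast v.map_natCast_le_of_dvd (Nat.dvd_factorial n.succ_pos hn)
  · simp [coeff_eq_zero_of_natDegree_lt hn]

end GaussBound

variable (v)

def GoodCenter (k : ℕ) (f : R[X]) (c y : R) : Prop :=
  GaussBound v (v (k : R)) (v (y - c)) (taylor c f) (v (f.eval y))

def HasCenters (f : R[X]) : Prop :=
  ∃ k : ℕ, 0 < k ∧ ∃ C : Finset R, ∀ y, ∃ c ∈ C, GoodCenter v k f c y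

variable {v}

theorem goodCenter_C (k : ℕ) (a c y : R) : GoodCenter v k (C a) c y := by
  rintro (_ | i)
  · simpa using mul_le_of_le_one_left' (v.map_natCast_le_one_s5 k)
  · simp [taylor_C, coeff_C_succ]

theorem GoodCenter.shift {k : ℕ} {g : R[X]} {c z y : R} (h : GoodCenter v k g c y)
    (hzc : v (z - c) ≤ v (y - c)) (hyz : v (y - z) ≤ v (y - c)) : GoodCenter v k g z y := by
  have hz := h.taylor hzc
  rw [taylor_taylor, sub_add_cancel] at hz
  exact fun i => le_trans (by gcongr) (hz i)

theorem GoodCenter.X_sub_C_mul {k : ℕ} {g : R[X]} {c z y : R} (h : GoodCenter v k g c y)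
    (hc : v (c - z) ≤ v (y - z)) (hy : v (y - c) ≤ v (y - z)) :
    GoodCenter v k ((X - C z) * g) c y := by
  have htaylor : taylor c ((X - C z) * g) = X * taylor c g + C (c - z) * taylor c g := by
    rw [taylor_mul, _root_.map_sub, taylor_X, taylor_C, C_sub]
    ring
  unfold GoodCenter
  rw [htaylor, eval_mul, eval_sub, eval_X, eval_C, map_mul]
  refine (GaussBound.X_mul h).mono ?_ |>.add ((GaussBound.C_mul h _).mono ?_)
  · rw [mul_comm]
    gcongr
  · gcongr

theorem goodCenter_sq {N : ℕ} {f : R[X]} {c y : R}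
    (hc : GaussBound v (v (N : R)) (v (y - c)) (divX (taylor c f)) (v (f.derivative.eval y)))
    (hfy : v (N : R) * v (y - c) * v (f.derivative.eval y) ≤ v (f.eval y)) :
    GoodCenter v (N ^ 2) f c y := by
  set q := taylor c f
  have hN : v ((N ^ 2 : ℕ) : R) = v (N : R) * v (N : R) := by
    rw [Nat.cast_pow, map_pow, sq]
  have hX : GaussBound v (v ((N ^ 2 : ℕ) : R)) (v (y - c)) (X * divX q) (v (f.eval y)) := by
    rw [hN]
    refine (GaussBound.mul_left (GaussBound.X_mul hc) _).mono ?_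
    simpa only [mul_comm, mul_left_comm, mul_assoc] using hfy
  have h0 : v ((N ^ 2 : ℕ) : R) * v (q.coeff 0) ≤ v (f.eval y) := by
    have hq : q.coeff 0 = f.eval y - (X * divX q).eval (y - c) := by
      rw [eq_sub_iff_add_eq, ← eval_C (x := y - c) (a := q.coeff 0), ← eval_add, add_comm,
        X_mul_divX_add, taylor_eval, sub_add_cancel]
    rw [hq]
    rcases le_max_iff.1 (v.map_sub (f.eval y) ((X * divX q).eval (y - c))) with h | h
    · exact (mul_le_mul_right h _).trans (mul_le_of_le_one_left' (v.map_natCast_le_one_s5 _))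
    · exact (mul_le_mul_right h _).trans hX.eval_le
  rintro (_ | i)
  · simpa [q] using h0
  · simpa [coeff_X_mul, coeff_divX] using hX (i + 1)

theorem HasCenters.X_sub_C_mul {g : R[X]} (h : HasCenters v g) (z : R) :
    HasCenters v ((X - C z) * g) := by
  classical
  obtain ⟨k, hk, C, hC⟩ := h
  refine ⟨k, hk, insert z C, fun y => ?_⟩
  obtain ⟨c, hc, hgc⟩ := hC y
  by_cases hcz : v (y - c) ≤ v (y - z)
  · refine ⟨c, Finset.mem_insert_of_mem hc, hgc.X_sub_C_mul ?_ hcz⟩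
    rw [← sub_add_sub_cancel c y z]
    exact v.map_add_le (by rwa [v.map_sub_swap]) le_rfl
  · rw [not_le] at hcz
    refine ⟨z, Finset.mem_insert_self z C, (hgc.shift ?_ hcz.le).X_sub_C_mul (by simp) le_rfl⟩
    rw [← sub_add_sub_cancel z y c]
    exact v.map_add_le (by rw [v.map_sub_swap]; exact hcz.le) le_rfl

end CommRing

section Field

variable {K : Type*} [Field K] {Γ₀ : Type*} [LinearOrderedCommGroupWithZero Γ₀]
  {v : Valuation K Γ₀} [HenselianLocalRing v.integer]

theorem exists_isRoot_of_coeff_lt_one {g : K[X]} (h0 : g.coeff 0 = 1) (h1 : g.coeff 1 = 1)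
    (hlt : ∀ j, 2 ≤ j → v (g.coeff j) < 1) : ∃ x, g.IsRoot x := by
  have hle : ∀ j, v (g.coeff j) ≤ 1
    | 0 => by simp [h0]
    | 1 => by simp [h1]
    | j + 2 => (hlt (j + 2) (by omega)).le
  obtain ⟨G, hG⟩ := (mem_lifts g).1 <|
    (lifts_iff_coeff_lifts (f := algebraMap v.integer K) g).2 fun j => ⟨⟨g.coeff j, hle j⟩, rfl⟩
  have hGcoeff : ∀ j, (G.coeff j : K) = g.coeff j := fun j => by
    rw [← hG, coeff_map]; rfl
  have hGres : G.map (residue v.integer) = X + 1 := by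
    ext (_ | _ | j)
    · simp [Subtype.ext ((hGcoeff 0).trans h0 : _ = ((1 : v.integer) : K))]
    · simp [Subtype.ext ((hGcoeff 1).trans h1 : _ = ((1 : v.integer) : K)), coeff_one]
    · rw [coeff_map]
      convert (residue_eq_zero_iff _).2 ?_
      · simp [coeff_X, coeff_one]
      rw [mem_maximalIdeal, mem_nonunits_iff, Integer.not_isUnit_iff_valuation_lt_one, hGcoeff]
      exact hlt (j + 2) (by omega)
  obtain ⟨a, ha⟩ := HenselianLocalRing.exists_isRoot_of_map_residue_eq_X_add_one hGres
  refine ⟨a, ?_⟩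
  rw [IsRoot, ← hG, eval_map]
  exact (eval₂_at_apply _ a).trans (by rw [ha.eq_zero, map_zero])

theorem exists_isRoot_of_dominant_linear_term (f : K[X]) (y : K)
    (σ : Γ₀) (hlin : v (f.eval y) < σ * v (f.derivative.eval y))
    (hhigh : ∀ j, 2 ≤ j → v ((taylor y f).coeff j) * σ ^ (j - 1) ≤ v (f.derivative.eval y)) :
    ∃ x, f.IsRoot x := by
  by_cases hfy : f.eval y = 0
  · exact ⟨y, hfy⟩
  set D := f.derivative.eval y
  have hD : D ≠ 0 := fun h => by simp [h] at hlin
  set t := f.eval y / D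
  have htD : v t * v D = v (f.eval y) := by rw [← map_mul, div_mul_cancel₀ _ hD]
  have hvt : v t < σ := by rwa [map_div, div_lt_iff₀ (zero_lt_iff.2 ((v.ne_zero_iff).2 hD))]
  have hvfy : 0 < v (f.eval y) := zero_lt_iff.2 ((v.ne_zero_iff).2 hfy)
  set g := C (f.eval y)⁻¹ * (taylor y f).comp (C t * X)
  have hg : ∀ j, g.coeff j = (f.eval y)⁻¹ * ((taylor y f).coeff j * t ^ j) := by
    simp [g, coeff_C_mul]
  obtain ⟨a, ha⟩ : ∃ a, g.IsRoot a := by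
    refine exists_isRoot_of_coeff_lt_one (v := v) (by simp [hg, hfy]) ?_ fun j hj => ?_
    · rw [hg, taylor_coeff_one, pow_one, mul_div_cancel₀ _ hD, inv_mul_cancel₀ hfy]
    · rw [hg, map_mul, map_inv₀, inv_mul_lt_one₀ hvfy, map_mul, map_pow, ← htD]
      exact mul_pow_lt_of_mul_pow_le hj hvt (hhigh j hj) (htD ▸ hvfy)
  refine ⟨t * a + y, ?_⟩
  simpa [g, taylor_eval, hfy] using ha

theorem HasCenters.of_derivative {f : K[X]} (hf : ∀ x, ¬f.IsRoot x)
    (h : HasCenters v (derivative f)) : HasCenters v f := by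
  obtain ⟨k, hk, C, hC⟩ := h
  set N := k * f.natDegree.factorial
  refine ⟨N ^ 2, by positivity, C, fun y => ?_⟩
  obtain ⟨c, hc, hkc⟩ := hC y
  have hvN : v (N : K) = v (k : K) * v (f.natDegree.factorial : K) := by
    rw [Nat.cast_mul, map_mul]
  have hdivX : ∀ z, GaussBound v (v (k : K)) (v (y - c)) (taylor z (derivative f))
      (v (f.derivative.eval y)) →
      GaussBound v (v (N : K)) (v (y - c)) (divX (taylor z f)) (v (f.derivative.eval y)) := by
    intro z hz
    rw [hvN, ← natDegree_taylor f z]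
    exact GaussBound.divX_of_derivative (by rwa [derivative_taylor])
  have hdy := hdivX y (by simpa [taylor_taylor] using hkc.taylor (s := y - c) le_rfl)
  refine ⟨c, hc, goodCenter_sq (hdivX c hkc) ?_⟩
  by_contra hlin
  obtain ⟨x, hx⟩ := exists_isRoot_of_dominant_linear_term f y (v (N : K) * v (y - c))
    (by simpa only [mul_comm, mul_left_comm, mul_assoc] using not_le.1 hlin)
    fun j hj => hdy.coeff_mul_pow_le (v.map_natCast_le_one_s5 N) hj
  exact hf x hx

theorem hasCenters (f : K[X]) : HasCenters v f := by
  induction hd : f.natDegree using Nat.strong_induction_on generalizing f with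
  | _ d IH =>
  rcases Nat.eq_zero_or_pos d with rfl | hpos
  · rw [eq_C_of_natDegree_eq_zero hd]
    exact ⟨1, one_pos, {0}, fun y => ⟨0, Finset.mem_singleton_self 0, goodCenter_C _ _ _ _⟩⟩
  by_cases hroot : ∃ z, f.IsRoot z
  · obtain ⟨z, hz⟩ := hroot
    rw [← mul_divByMonic_eq_iff_isRoot.2 hz]
    refine HasCenters.X_sub_C_mul (IH _ ?_ _ rfl) z
    rw [natDegree_divByMonic _ (monic_X_sub_C z), natDegree_X_sub_C]
    omega
  · exact HasCenters.of_derivative (not_exists.1 hroot)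
      (IH _ (hd ▸ natDegree_derivative_lt (by omega)) _ rfl)

end Field

end Valuation

theorem cell_decomposition_polynomial_centers_general
    {K : Type*} [Field K]
    {Γ₀ : Type*} [LinearOrderedCommGroupWithZero Γ₀]
    (v : Valuation K Γ₀) (hhens : HenselianLocalRing v.integer)
    (f : K[X]) (d : ℕ) :
    ∃ k : ℕ, 0 < k ∧ ∃ C : Finset K, ∀ y : K, ∃ c ∈ C,
      ∀ i ≤ d, v (k : K) * v ((Polynomial.taylor c f).coeff i) * v (y - c) ^ i
        ≤ v (f.eval y) := by
  obtain ⟨k, hk, C, hC⟩ := v.hasCenters f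
  exact ⟨k, hk, C, fun y => (hC y).imp fun c ⟨hc, hgood⟩ => ⟨hc, fun i _ => hgood i⟩⟩

/-- Valuation-theoretic core of the paper's one-variable cell decomposition lemma
(Lemma 7.17 `lcd`): for a polynomial `f` of degree `d` over a Henselian valued field of
characteristic zero, there are a positive integer `k` and finitely many centers `C ⊆ K`
such that every `y ∈ K` admits a center `c ∈ C` with, in the Taylor expansion
`f(Y) = Σ b_{i,c} (Y - c)ⁱ`, `ord f(y) ≤ min_i ord (k · b_{i,c} · (y - c)ⁱ)`, i.e.
`v k * v b_{i,c} * v (y - c) ^ i ≤ v (f y)` for all `i ≤ d`. -/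
theorem cell_decomposition_polynomial_centers
    {K : Type*} [Field K] [CharZero K]
    {Γ₀ : Type*} [LinearOrderedCommGroupWithZero Γ₀]
    (v : Valuation K Γ₀) (hhens : HenselianLocalRing v.integer)
    (f : K[X]) (d : ℕ) (hd : f.natDegree = d) :
    ∃ k : ℕ, 0 < k ∧ ∃ C : Finset K, ∀ y : K, ∃ c ∈ C,
      ∀ i ≤ d, v (k : K) * v ((Polynomial.taylor c f).coeff i) * v (y - c) ^ i
        ≤ v (f.eval y) :=
  cell_decomposition_polynomial_centers_general v hhens f d
end

section
/- Let p be a prime with p > 3, let a be a natural number, and let c be an integer with p ∤ c. Consider the set F of all nonzero x ∈ ℤ_p such that x is a cube in ℚ_p (i.e., x = y³ for some y ∈ ℚ_p), ‖x‖_p = p^{−a}, and the unit part of x is congruent to c modulo p (i.e., x = p^a·u with u ∈ ℤ_p and u − c ∈ p·ℤ_p). If 3 divides a and c is a cube modulo p, then F equals the ball {x ∈ ℤ_p : ‖x − c·p^a‖_p ≤ p^{−(a+1)}}; otherwise F is empty. -/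
/-!
Write `x = p^a u`. The ball condition `‖x - c p^a‖ ≤ p^{-(a+1)}` says exactly that `u ≡ c (mod p)`,
so `u` is a unit. A cube in `ℚ_p` has valuation divisible by `3`, and a unit `u` times `p^{3k}` is a
cube iff `u` is a cube in `ℤ_p`. Since `p ≠ 3`, Hensel's lemma applied to `X^3 - u` shows that a unit
is a cube in `ℤ_p` iff its residue is a cube in `ZMod p`.
-/

/-- The set of nonzero `p`-adic integers that are cubes in `ℚ_p`, have norm `p^{-a}`
(i.e. `ord = a`), and whose unit part is congruent to `c` modulo `p` (i.e. angular
component equal to `c mod p`). -/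
def cubeCell (p : ℕ) [Fact (Nat.Prime p)] (a : ℕ) (c : ℤ) : Set ℤ_[p] :=
  {x : ℤ_[p] | x ≠ 0 ∧ (∃ y : ℚ_[p], (x : ℚ_[p]) = y ^ 3) ∧
    ‖x‖ = (p : ℝ) ^ (-(a : ℤ)) ∧
    ∃ u : ℤ_[p], x = (p : ℤ_[p]) ^ a * u ∧ (p : ℤ_[p]) ∣ (u - (c : ℤ_[p]))}

namespace PadicInt

variable {p : ℕ} [Fact p.Prime]

theorem p_dvd_sub_iff_toZMod_eq {u v : ℤ_[p]} : (p : ℤ_[p]) ∣ u - v ↔ toZMod u = toZMod v := by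
  rw [← Ideal.mem_span_singleton, ← maximalIdeal_eq_span_p, ← ker_toZMod, RingHom.mem_ker,
    map_sub, sub_eq_zero]

theorem norm_eq_one_iff_toZMod_ne_zero {u : ℤ_[p]} : ‖u‖ = 1 ↔ toZMod u ≠ 0 := by
  rw [← map_zero toZMod, ne_eq, ← p_dvd_sub_iff_toZMod_eq, sub_zero, ← norm_lt_one_iff_dvd]
  exact ⟨fun h => h.not_lt, fun h => (norm_le_one u).eq_of_not_lt h⟩

theorem norm_eq_one_of_p_dvd_sub_intCast {u : ℤ_[p]} {c : ℤ} (hc : ¬ (p : ℤ) ∣ c)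
    (h : (p : ℤ_[p]) ∣ u - c) : ‖u‖ = 1 := by
  rwa [norm_eq_one_iff_toZMod_ne_zero, p_dvd_sub_iff_toZMod_eq.1 h, map_intCast, ne_eq,
    ZMod.intCast_zmod_eq_zero_iff_dvd]

theorem norm_sub_mul_p_pow_le_iff {x c : ℤ_[p]} {a : ℕ} :
    ‖x - c * p ^ a‖ ≤ (p : ℝ) ^ (-((a : ℤ) + 1)) ↔
      ∃ u : ℤ_[p], x = p ^ a * u ∧ (p : ℤ_[p]) ∣ u - c := by
  rw [show -((a : ℤ) + 1) = -((a + 1 : ℕ) : ℤ) by push_cast; rfl,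
    norm_le_pow_iff_mem_span_pow, Ideal.mem_span_singleton, pow_succ]
  constructor
  · rintro ⟨t, ht⟩
    exact ⟨c + p * t, by linear_combination ht, by simp⟩
  · rintro ⟨u, rfl, t, ht⟩
    exact ⟨t, by linear_combination (p : ℤ_[p]) ^ a * ht⟩

open Polynomial in
theorem exists_pow_eq_of_toZMod_eq_pow {n : ℕ} (hn : (n : ZMod p) ≠ 0) {u : ℤ_[p]} {z : ZMod p}
    (hz : z ≠ 0) (hu : toZMod u = z ^ n) : ∃ w : ℤ_[p], w ^ n = u := by
  set F : ℤ_[p][X] := X ^ n - C u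
  set w₀ : ℤ_[p] := (z.val : ℤ_[p])
  have hw₀ : toZMod w₀ = z := by simp [w₀]
  have hderiv : ‖F.derivative.aeval w₀‖ = 1 := by
    have hn' : ‖(n : ℤ_[p])‖ = 1 := norm_eq_one_iff_toZMod_ne_zero.2 (by simpa using hn)
    have hw₀' : ‖w₀‖ = 1 := norm_eq_one_iff_toZMod_ne_zero.2 (hw₀ ▸ hz)
    simp [F, derivative_X_pow, hn', hw₀']
  have hval : ‖F.aeval w₀‖ < 1 := by
    rw [norm_lt_one_iff_dvd, ← sub_zero (F.aeval w₀), p_dvd_sub_iff_toZMod_eq]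
    simp [F, hw₀, hu]
  obtain ⟨w, hw, -⟩ := hensels_lemma (F := F) (a := w₀) (by rw [hderiv]; simpa using hval)
  exact ⟨w, by simpa [F, sub_eq_zero] using hw⟩

theorem dvd_and_exists_pow_eq_of_pow_mul_eq_pow {n a : ℕ} (hn : n ≠ 0) {u : ℤ_[p]}
    (hu : ‖u‖ = 1) {y : ℚ_[p]} (hy : (p : ℚ_[p]) ^ a * u = y ^ n) :
    n ∣ a ∧ ∃ w : ℤ_[p], u = w ^ n := by
  have hp1 : (1 : ℝ) < p := mod_cast (Fact.out : p.Prime).one_lt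
  have hnorm : ‖y‖ ^ n = (p : ℝ) ^ (-(a : ℤ)) := by
    rw [← norm_pow, ← hy, norm_mul, Padic.norm_p_pow, padic_norm_e_of_padicInt, hu, mul_one]
  have hy0 : y ≠ 0 := by
    rintro rfl
    rw [norm_zero, zero_pow hn] at hnorm
    exact (zpow_pos (by linarith) _).ne' hnorm.symm
  have hval : y.valuation * n = a := by
    rw [Padic.norm_eq_zpow_neg_valuation hy0, ← zpow_natCast, ← zpow_mul] at hnorm
    have := zpow_right_injective₀ (by linarith) hp1.ne' hnorm
    linarith
  obtain ⟨k, hk⟩ := Int.eq_ofNat_of_zero_le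
    (nonneg_of_mul_nonneg_left (hval ▸ Int.natCast_nonneg a) (by omega))
  rw [hk] at hval
  have hka : a = k * n := by exact_mod_cast hval.symm
  have hw : ‖y / p ^ k‖ ≤ 1 := by
    rw [norm_div, Padic.norm_p_pow, Padic.norm_eq_zpow_neg_valuation hy0, hk,
      div_self (zpow_pos (by linarith) _).ne']
  let w : ℤ_[p] := ⟨y / p ^ k, hw⟩
  refine ⟨⟨k, hka.trans (mul_comm _ _)⟩, w, PadicInt.ext ?_⟩
  have hpa : (p : ℚ_[p]) ^ a ≠ 0 := pow_ne_zero _ (mod_cast (Fact.out : p.Prime).ne_zero)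
  rw [coe_pow, show (w : ℚ_[p]) = y / p ^ k from rfl, div_pow, ← hy, ← pow_mul, ← hka,
    mul_div_cancel_left₀ _ hpa]

end PadicInt

open PadicInt

theorem mem_cubeCell_iff {p : ℕ} [Fact p.Prime] {a : ℕ} {c : ℤ} (hc : ¬ (p : ℤ) ∣ c)
    {x : ℤ_[p]} : x ∈ cubeCell p a c ↔
      (∃ y : ℚ_[p], (x : ℚ_[p]) = y ^ 3) ∧ ∃ u : ℤ_[p], x = p ^ a * u ∧ (p : ℤ_[p]) ∣ u - c := by
  refine ⟨fun ⟨_, hcube, _, hunit⟩ => ⟨hcube, hunit⟩, ?_⟩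
  rintro ⟨hcube, u, rfl, hu⟩
  have hnorm : ‖(p : ℤ_[p]) ^ a * u‖ = (p : ℝ) ^ (-(a : ℤ)) := by
    rw [norm_mul, norm_p_pow, norm_eq_one_of_p_dvd_sub_intCast hc hu, mul_one]
  refine ⟨?_, hcube, hnorm, u, rfl, hu⟩
  intro h
  rw [h, norm_zero] at hnorm
  exact (zpow_pos (mod_cast (Fact.out : p.Prime).pos) _).ne' hnorm.symm

/-- Example (1) of the paper: for `p > 3`, `p ∤ c`, the piece of the set of `p`-adic
integer cubes with `ord = a` and angular component `c mod p` is the ball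
`{x ∈ ℤ_p : ‖x − c·p^a‖ ≤ p^{−(a+1)}}` if `3 ∣ a` and `c` is a cube modulo `p`,
and is empty otherwise. -/
theorem cubeCell_eq_ball_or_empty
    (p : ℕ) [Fact (Nat.Prime p)] (hp : 3 < p) (a : ℕ) (c : ℤ) (hc : ¬ (p : ℤ) ∣ c) :
    ((3 ∣ a ∧ ∃ z : ZMod p, z ^ 3 = (c : ZMod p)) →
      cubeCell p a c =
        {x : ℤ_[p] | ‖x - (c : ℤ_[p]) * (p : ℤ_[p]) ^ a‖ ≤ (p : ℝ) ^ (-((a : ℤ) + 1))}) ∧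
    (¬ (3 ∣ a ∧ ∃ z : ZMod p, z ^ 3 = (c : ZMod p)) → cubeCell p a c = ∅) := by
  refine ⟨fun ⟨⟨k, hk⟩, z, hz⟩ => ?_, fun hnot => ?_⟩
  · have h3 : ((3 : ℕ) : ZMod p) ≠ 0 := by
      rw [ne_eq, ZMod.natCast_eq_zero_iff]
      exact fun h => absurd (Nat.le_of_dvd three_pos h) (by omega)
    have hz0 : z ≠ 0 := by
      rintro rfl
      rw [zero_pow three_ne_zero, eq_comm, ZMod.intCast_zmod_eq_zero_iff_dvd] at hz
      exact hc hz
    ext x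
    rw [mem_cubeCell_iff hc, Set.mem_ofPred_eq, norm_sub_mul_p_pow_le_iff, and_iff_right_iff_imp]
    rintro ⟨u, rfl, hu⟩
    obtain ⟨w, rfl⟩ := exists_pow_eq_of_toZMod_eq_pow h3 hz0
      (by rw [p_dvd_sub_iff_toZMod_eq.1 hu, map_intCast, hz])
    exact ⟨p ^ k * w, by push_cast; rw [hk]; ring⟩
  · refine Set.eq_empty_of_forall_notMem fun x hx => hnot ?_
    obtain ⟨⟨y, hy⟩, u, rfl, hu⟩ := (mem_cubeCell_iff hc).1 hx
    obtain ⟨h3, w, rfl⟩ := dvd_and_exists_pow_eq_of_pow_mul_eq_pow three_ne_zero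
      (norm_eq_one_of_p_dvd_sub_intCast hc hu) (by simpa using hy)
    exact ⟨h3, toZMod w, by rw [← map_pow, p_dvd_sub_iff_toZMod_eq.1 hu, map_intCast]⟩
end
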